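/- arXiv:1011.1945 — 6 statements merged into one kernel-verified Lean document; each statement's English description precedes it below -/
import Mathlib

section
/- For any partition λ and any positive integers m and k, if λ is a k-core then λ is also an mk-core. Equivalently, if c is a hook length of λ, then every divisor of c is also a hook length of λ. -/
/-- A partition represented as a weakly decreasing list of positive parts. -/
def IsPartitionList (l : List ℕ) : Prop :=
  l.Pairwise (· ≥ ·) ∧ ∀ p ∈ l, 0 < p

/-- Hook length of the cell in row `i`, column `j` (both 0-indexed). -/
def hookLen (l : List ℕ) (i j : ℕ) : ℕ :=
  (l.getD i 0 - j) + (l.drop (i + 1)).countP (fun a => decide (j < a))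

/-- The hookset of a partition: the set of its hook lengths. -/
def hookset (l : List ℕ) : Set ℕ :=
  {h | ∃ i j, i < l.length ∧ j < l.getD i 0 ∧ h = hookLen l i j}

/-- `l` is a `t`-core: no hook length of `l` is divisible by `t`. -/
def IsCore (l : List ℕ) (t : ℕ) : Prop := ∀ h ∈ hookset l, ¬ t ∣ h

/-- A numerical set: contains 0 and has finite complement in ℕ. -/
def NumericalSet (S : Set ℕ) : Prop := 0 ∈ S ∧ Sᶜ.Finite

/-- The atom monoid of a numerical set. -/
def atomMonoid (S : Set ℕ) : Set ℕ := {n | ∀ s ∈ S, n + s ∈ S}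

/-- The set of positions of east steps of the profile of the partition `l`
(step `i` is north exactly when `i = l[a] + (length - 1 - a)` for some row `a`). -/
def pathSet (l : List ℕ) : Set ℕ :=
  {i | ¬ ∃ a, a < l.length ∧ i = l.getD a 0 + (l.length - 1 - a)}

/-- The staircase partition `(k, k-1, ..., 2, 1)`. -/
def staircase (k : ℕ) : List ℕ := (List.range k).reverse.map (· + 1)

/-!
Read the boundary of the Young diagram of `λ` as a lattice path: its east steps sit at the
positions in `pathSet λ`, its north steps at the beta numbers `λ_a + (r - 1 - a)`, where `r` is
the number of rows. The hook of cell `(i, j)` joins the east step of column `j` to the north step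
of row `i`, so the hook lengths are exactly the differences `y - s` with `s` an east and `y` a
later north position. If `y = s + d * k`, the walk `s, s + d, …, s + d * k` starts on an east
step and ends on a north step, so some single stride of length `d` does too, and `d` is a hook
length.
-/

theorem List.countP_eq_of_getElem_iff {α : Type*} (p : α → Bool) :
    ∀ (l : List α) (m : ℕ), m ≤ l.length →
      (∀ a (ha : a < l.length), p l[a] = true ↔ a < m) → l.countP p = m
  | [], m, hm, _ => by simp_all
  | x :: l, m, hm, hp => by
    have hx : p x = true ↔ 0 < m := hp 0 (by simp)
    have htail : l.countP p = m - 1 :=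
      List.countP_eq_of_getElem_iff p l (m - 1) (by simp at hm; omega) fun a ha => by
        have ha' : a + 1 < (x :: l).length := by simpa using ha
        rw [show l[a] = (x :: l)[a + 1] from rfl, hp (a + 1) ha']
        omega
    rw [List.countP_cons, htail]
    split_ifs <;> simp_all; omega

theorem exists_lt_iff_of_downward_closed (r : ℕ) (P : ℕ → Prop)
    (hP : ∀ a b, a ≤ b → b < r → P b → P a) : ∃ m ≤ r, ∀ a < r, P a ↔ a < m := by
  induction r with
  | zero => exact ⟨0, le_rfl, fun a ha => absurd ha (Nat.not_lt_zero a)⟩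
  | succ r ih =>
    obtain ⟨m, hmr, hm⟩ := ih fun a b hab hb => hP a b hab (by omega)
    by_cases hr : P r
    · have hmr' : m = r := le_antisymm hmr (not_lt.mp fun h =>
        lt_irrefl m ((hm m h).mp (hP m r h.le (by omega) hr)))
      refine ⟨r + 1, le_rfl, fun a ha => ⟨fun _ => ha, fun _ => ?_⟩⟩
      rcases Nat.lt_succ_iff_lt_or_eq.mp ha with ha | rfl
      · exact (hm a ha).mpr (by omega)
      · exact hr
    · refine ⟨m, by omega, fun a ha => ?_⟩
      rcases Nat.lt_succ_iff_lt_or_eq.mp ha with ha | rfl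
      · exact hm a ha
      · exact ⟨fun h => absurd h hr, fun h => by omega⟩

/-- The hook lengths of the partition whose profile has its east steps at the positions in `S`. -/
def hooksOf (S : Set ℕ) : Set ℕ := {h | ∃ s ∈ S, s + h ∉ S}

theorem dvd_mem_hooksOf {S : Set ℕ} {h d : ℕ} (hh : h ∈ hooksOf S) (hd : d ∣ h) :
    d ∈ hooksOf S := by
  obtain ⟨s, hs, hsh⟩ := hh
  obtain ⟨k, rfl⟩ := hd
  induction k with
  | zero => exact absurd hs (by simpa using hsh)
  | succ k ih =>
    by_cases hk : s + d * k ∈ S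
    · exact ⟨s + d * k, hk, by rwa [add_assoc, ← Nat.mul_succ]⟩
    · exact ih hk

def beta (l : List ℕ) (a : ℕ) : ℕ := l.getD a 0 + (l.length - 1 - a)

theorem mem_pathSet_iff {l : List ℕ} {x : ℕ} :
    x ∈ pathSet l ↔ ∀ a < l.length, beta l a ≠ x := by
  simp [pathSet, beta, eq_comm]

section ColumnLength

variable {l : List ℕ} {i j m : ℕ}

/-! Throughout, `m` is the length of column `j`. -/

theorem hookLen_eq_of_colLen (hm : m ≤ l.length)
    (hcol : ∀ a < l.length, j < l.getD a 0 ↔ a < m) :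
    hookLen l i j = (l.getD i 0 - j) + (m - (i + 1)) := by
  unfold hookLen
  congr 1
  refine List.countP_eq_of_getElem_iff _ _ _ (by simp; omega) fun a ha => ?_
  have ha' : i + 1 + a < l.length := by simp at ha; omega
  rw [List.getElem_drop, decide_eq_true_iff, ← List.getD_eq_getElem l 0 ha', hcol _ ha']
  omega

theorem mem_pathSet_of_colLen (hcol : ∀ a < l.length, j < l.getD a 0 ↔ a < m) :
    j + l.length - m ∈ pathSet l := by
  refine mem_pathSet_iff.mpr fun a ha => ?_
  have := hcol a ha
  unfold beta
  by_cases hlt : a < m <;> omega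

theorem add_hookLen_of_colLen (hm : m ≤ l.length) (hi : i < m)
    (hcol : ∀ a < l.length, j < l.getD a 0 ↔ a < m) :
    (j + l.length - m) + hookLen l i j = beta l i := by
  have hij := (hcol i (by omega)).mpr hi
  rw [hookLen_eq_of_colLen hm hcol, beta]
  omega

end ColumnLength

section Partition

variable {l : List ℕ} (hl : l.Pairwise (· ≥ ·))
include hl

theorem getD_antitone {a b : ℕ} (hab : a ≤ b) (hb : b < l.length) :
    l.getD b 0 ≤ l.getD a 0 := by
  rcases hab.eq_or_lt with rfl | h
  · exact le_rfl
  · rw [List.getD_eq_getElem l 0 hb, List.getD_eq_getElem l 0 (h.trans hb)]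
    exact List.pairwise_iff_getElem.mp hl a b _ hb h

theorem beta_antitone {a b : ℕ} (hab : a ≤ b) (hb : b < l.length) :
    beta l b ≤ beta l a := by
  have := getD_antitone hl hab hb
  unfold beta
  omega

theorem hookset_subset_hooksOf : hookset l ⊆ hooksOf (pathSet l) := by
  rintro _ ⟨i, j, hi, hj, rfl⟩
  obtain ⟨m, hm, hcol⟩ := exists_lt_iff_of_downward_closed l.length (fun a => j < l.getD a 0)
    fun a b hab hb hjb => hjb.trans_le (getD_antitone hl hab hb)
  have him : i < m := (hcol i hi).mp hj
  refine ⟨j + l.length - m, mem_pathSet_of_colLen hcol, ?_⟩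
  rw [add_hookLen_of_colLen hm him hcol, mem_pathSet_iff]
  exact fun h => h i hi rfl

theorem hooksOf_subset_hookset : hooksOf (pathSet l) ⊆ hookset l := by
  rintro h ⟨x, hx, hxh⟩
  obtain ⟨i, hi, hbi⟩ : ∃ i < l.length, beta l i = x + h := by
    simpa [mem_pathSet_iff] using hxh
  rw [mem_pathSet_iff] at hx
  obtain ⟨m, hm, hrow⟩ := exists_lt_iff_of_downward_closed l.length (fun a => x < beta l a)
    fun a b hab hb hxb => hxb.trans_le (beta_antitone hl hab hb)
  have him : i < m := (hrow i hi).mp (by have := hx i hi; omega)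
  have hbelow : ∀ a < l.length, m ≤ a → beta l a < x := fun a ha hma =>
    lt_of_le_of_ne (not_lt.mp ((hrow a ha).not.mpr (by omega))) (hx a ha)
  have hxm : l.length - m ≤ x := by
    rcases hm.eq_or_lt with rfl | hml
    · omega
    · have := hbelow m hml le_rfl
      unfold beta at this
      omega
  have hcol : ∀ a < l.length, x + m - l.length < l.getD a 0 ↔ a < m := by
    refine fun a ha => ⟨fun hja => by_contra fun hma => ?_, fun ham => ?_⟩
    · have := getD_antitone hl (not_lt.mp hma) ha
      have := hbelow m (by omega) le_rfl
      unfold beta at this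
      omega
    · have := getD_antitone hl (show a ≤ m - 1 by omega) (by omega)
      have := (hrow (m - 1) (by omega)).mpr (by omega)
      unfold beta at this
      omega
  -- the east step at `x` belongs to column `x + m - r`
  refine ⟨i, x + m - l.length, hi, (hcol i hi).mpr him, ?_⟩
  have := add_hookLen_of_colLen hm him hcol
  omega

theorem hookset_eq_hooksOf_pathSet : hookset l = hooksOf (pathSet l) :=
  (hookset_subset_hooksOf hl).antisymm (hooksOf_subset_hookset hl)

end Partition

theorem stmt0 :
    (∀ l : List ℕ, IsPartitionList l → ∀ m k : ℕ, 0 < m → 0 < k →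
      IsCore l k → IsCore l (m * k)) ∧
    (∀ l : List ℕ, IsPartitionList l → ∀ c ∈ hookset l, ∀ d : ℕ, d ∣ c →
      d ∈ hookset l) := by
  refine ⟨fun l _ m k _ _ hcore h hh hdvd => hcore h hh (dvd_of_mul_left_dvd hdvd), ?_⟩
  intro l hl c hc d hd
  rw [hookset_eq_hooksOf_pathSet hl.1] at hc ⊢
  exact dvd_mem_hooksOf hc hd
end

section
/- The hookset of the staircase partition (k, k-1, ..., 2, 1) is exactly the set of odd numbers {1, 3, 5, ..., 2k-1}. -/
/-! In the staircase the cell `(i, j)` has arm and leg both equal to `k - i - j - 1`, so its hook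
length is `2 (k - i - j) - 1`; already the first row realises every odd number up to `2k - 1`. -/

theorem staircase_succ (k : ℕ) : staircase (k + 1) = (k + 1) :: staircase k := by
  simp [staircase, List.range_succ]

theorem length_staircase (k : ℕ) : (staircase k).length = k := by
  simp [staircase]

theorem staircase_getD (k i : ℕ) : (staircase k).getD i 0 = k - i := by
  induction k generalizing i with
  | zero => simp [staircase]
  | succ k ih =>
    cases i <;> simp only [staircase_succ, List.getD_cons_zero, List.getD_cons_succ, ih] <;> omega

theorem staircase_drop (k n : ℕ) : (staircase k).drop n = staircase (k - n) := by
  induction k generalizing n with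
  | zero => simp [staircase]
  | succ k ih => cases n <;> simp [staircase_succ, ih]

theorem staircase_countP_lt (k j : ℕ) :
    (staircase k).countP (fun a => decide (j < a)) = k - j := by
  induction k with
  | zero => simp [staircase]
  | succ k ih =>
    rw [staircase_succ, List.countP_cons, ih]
    by_cases h : j < k + 1 <;> simp [h] <;> omega

theorem hookLen_staircase (k i j : ℕ) :
    hookLen (staircase k) i j = (k - i - j) + (k - (i + 1) - j) := by
  rw [hookLen, staircase_getD, staircase_drop, staircase_countP_lt]

theorem stmt2 (k : ℕ) :
    hookset (staircase k) = {h | Odd h ∧ h ≤ 2 * k - 1} := by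
  ext h
  simp only [hookset, Set.mem_ofPred_eq, length_staircase, staircase_getD, hookLen_staircase]
  constructor
  · rintro ⟨i, j, hi, hj, rfl⟩
    exact ⟨⟨k - i - j - 1, by omega⟩, by omega⟩
  · rintro ⟨⟨n, rfl⟩, hle⟩
    exact ⟨0, k - (n + 1), by omega, by omega, by omega⟩
end

section
/- The complement of the hookset of any partition, within the positive integers, is closed under addition: if neither s nor t is a hook length of λ, then s + t is not a hook length of λ. -/
/-!
Read the boundary of the Young diagram of `l` as a lattice path: step `p` is east iff
`p ∈ pathSet l`, north steps sit at `l[a] + (ℓ - 1 - a)` and east steps at `j + (ℓ - λ'ⱼ)`,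
where `λ'ⱼ = colLen l j` is the length of column `j`. The hook of cell `(i, j)` joins the east
step of column `j` to the north step of row `i`, so the hook lengths are exactly the distances
from an east step to a later north step. If `s + t` is such a distance, from `p` to `p + s + t`,
then step `p + s` is either north, making `s` a hook length, or east, making `t` one.
-/

def colLen (l : List ℕ) (j : ℕ) : ℕ := l.countP (j < ·)

lemma colLen_le_length (l : List ℕ) (j : ℕ) : colLen l j ≤ l.length :=
  List.countP_le_length

lemma colLen_succ_le (l : List ℕ) (j : ℕ) : colLen l (j + 1) ≤ colLen l j :=
  List.countP_mono_left fun a _ h => by simp only [decide_eq_true_eq] at *; omega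

lemma colLen_zero {l : List ℕ} (hpos : ∀ p ∈ l, 0 < p) : colLen l 0 = l.length :=
  List.countP_eq_length.mpr fun a ha => by simpa using hpos a ha

lemma colLen_cons {x : ℕ} {xs : List ℕ} (j : ℕ) :
    colLen (x :: xs) j = colLen xs j + if j < x then 1 else 0 := by
  simp [colLen, List.countP_cons]

lemma colLen_cons_eq_zero {x j : ℕ} {xs : List ℕ} (hl : (x :: xs).Pairwise (· ≥ ·))
    (hx : x ≤ j) : colLen (x :: xs) j = 0 :=
  List.countP_eq_zero.mpr fun a ha => by
    have : a ≤ x := by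
      rcases List.mem_cons.mp ha with rfl | ha
      · exact le_rfl
      · exact List.rel_of_pairwise_cons hl ha
    simp only [decide_eq_true_eq]; omega

lemma countP_drop_eq_colLen_sub {l : List ℕ} (hl : l.Pairwise (· ≥ ·)) (n j : ℕ) :
    (l.drop n).countP (fun a => decide (j < a)) = colLen l j - n := by
  induction l generalizing n with
  | nil => simp [colLen]
  | cons x xs ih =>
    cases n with
    | zero => rfl
    | succ n =>
      rw [List.drop_succ_cons, ih hl.of_cons]
      by_cases hx : j < x
      · simp only [colLen_cons, hx, if_true]; omega
      · have h0 := colLen_cons_eq_zero hl (not_lt.mp hx)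
        simp only [colLen_cons, hx, if_false] at h0 ⊢; omega

lemma lt_getD_iff_lt_colLen {l : List ℕ} (hl : l.Pairwise (· ≥ ·)) (a j : ℕ) :
    j < l.getD a 0 ↔ a < colLen l j := by
  induction l generalizing a with
  | nil => simp [colLen]
  | cons x xs ih =>
    by_cases hx : j < x
    · cases a with
      | zero => simp [colLen_cons, hx]
      | succ a => simp only [List.getD_cons_succ, ih hl.of_cons, colLen_cons, hx, if_true]; omega
    · have h0 := colLen_cons_eq_zero hl (not_lt.mp hx)
      rw [h0]
      cases a with
      | zero => simpa using hx
      | succ a =>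
        simp only [colLen_cons, hx, if_false] at h0
        rw [List.getD_cons_succ, ih hl.of_cons]; omega

lemma hookLen_eq {l : List ℕ} (hl : l.Pairwise (· ≥ ·)) (i j : ℕ) :
    hookLen l i j = l.getD i 0 - j + (colLen l j - (i + 1)) := by
  rw [hookLen, countP_drop_eq_colLen_sub hl]

lemma notMem_pathSet_iff {l : List ℕ} {p : ℕ} :
    p ∉ pathSet l ↔ ∃ a < l.length, p = l.getD a 0 + (l.length - 1 - a) := by
  simp [pathSet]

lemma mem_pathSet_iff_s5 {l : List ℕ} (hl : IsPartitionList l) {p : ℕ} :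
    p ∈ pathSet l ↔ ∃ j, p = j + (l.length - colLen l j) := by
  have hlt := lt_getD_iff_lt_colLen hl.1
  constructor
  · intro hp
    have hex : ∃ m, p < m + (l.length - colLen l m) := ⟨p + 1, by omega⟩
    obtain ⟨j, hj⟩ : ∃ j, Nat.find hex = j + 1 :=
      Nat.exists_eq_add_one.mpr <| Nat.pos_of_ne_zero fun h0 => by
        have hfind := Nat.find_spec hex
        rw [h0, colLen_zero hl.2] at hfind
        omega
    have hlo : j + (l.length - colLen l j) ≤ p := not_lt.mp (Nat.find_min hex (by omega))
    have hhi := hj ▸ Nat.find_spec hex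
    refine ⟨j, le_antisymm ?_ hlo⟩
    by_contra! hgap
    -- `p` lies strictly between the east steps of columns `j` and `j + 1`: the north step of row `c`
    have hsucc := colLen_succ_le l j
    have hle := colLen_le_length l j
    set c := j + l.length - p
    have hc : j < l.getD c 0 := (hlt c j).mpr (by omega)
    have hc' : ¬ j + 1 < l.getD c 0 := fun h => by have := (hlt c (j + 1)).mp h; omega
    exact notMem_pathSet_iff.mpr ⟨c, by omega, by omega⟩ hp
  · rintro ⟨j, rfl⟩ ⟨a, ha, heq⟩
    have hrow := (hlt a j).not
    have hle := colLen_le_length l j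
    omega

lemma mem_hookset_iff {l : List ℕ} (hl : IsPartitionList l) {h : ℕ} :
    h ∈ hookset l ↔ ∃ p ∈ pathSet l, p + h ∉ pathSet l := by
  have hlt := lt_getD_iff_lt_colLen hl.1
  constructor
  · rintro ⟨i, j, hi, hj, rfl⟩
    have hiC := (hlt i j).mp hj
    have hle := colLen_le_length l j
    refine ⟨j + (l.length - colLen l j), (mem_pathSet_iff_s5 hl).mpr ⟨j, rfl⟩,
      notMem_pathSet_iff.mpr ⟨i, hi, ?_⟩⟩
    rw [hookLen_eq hl.1]
    omega
  · rintro ⟨p, hp, hph⟩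
    obtain ⟨j, rfl⟩ := (mem_pathSet_iff_s5 hl).mp hp
    obtain ⟨i, hi, heq⟩ := notMem_pathSet_iff.mp hph
    have hle := colLen_le_length l j
    have hij : i < colLen l j := by
      by_contra! hji
      have hrow := (hlt i j).not.mpr (by omega)
      omega
    have hj := (hlt i j).mpr hij
    refine ⟨i, j, hi, hj, ?_⟩
    rw [hookLen_eq hl.1]
    omega

theorem stmt5_general (l : List ℕ) (hl : IsPartitionList l) (s t : ℕ)
    (hsn : s ∉ hookset l) (htn : t ∉ hookset l) :
    s + t ∉ hookset l := by
  rw [mem_hookset_iff hl] at hsn htn ⊢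
  rintro ⟨p, hp, hpst⟩
  by_cases hps : p + s ∈ pathSet l
  · exact htn ⟨p + s, hps, by rwa [add_assoc]⟩
  · exact hsn ⟨p, hp, hps⟩

theorem stmt5 (l : List ℕ) (hl : IsPartitionList l) (s t : ℕ)
    (hs : 0 < s) (ht : 0 < t)
    (hsn : s ∉ hookset l) (htn : t ∉ hookset l) :
    s + t ∉ hookset l :=
  stmt5_general l hl s t hsn htn
end

section
/- A set of positive integers arises as the hookset of some partition if and only if its complement (together with 0) is a numerical monoid. Moreover, hooksets of size g correspond exactly to numerical monoids of genus g. -/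
/-- A numerical monoid: contains 0, closed under addition, finite complement. -/
def NumericalMonoid (M : Set ℕ) : Prop :=
  0 ∈ M ∧ (∀ a ∈ M, ∀ b ∈ M, a + b ∈ M) ∧ Mᶜ.Finite

namespace List

variable {α : Type*} {l : List α} {a : ℕ}

theorem eq_take_append_getElem_cons_drop (ha : a < l.length) :
    l = l.take a ++ l[a] :: l.drop (a + 1) := by
  rw [getElem_cons_drop, take_append_drop]

theorem Pairwise.rel_getElem_of_mem_take {R : α → α → Prop} (hl : l.Pairwise R)
    (ha : a < l.length) {x : α} (hx : x ∈ l.take a) : R x l[a] :=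
  hl.rel_of_mem_take_of_mem_drop hx (getElem_cons_drop ha ▸ mem_cons_self)

theorem Pairwise.rel_getElem_of_mem_drop {R : α → α → Prop} (hl : l.Pairwise R)
    (ha : a < l.length) {x : α} (hx : x ∈ l.drop (a + 1)) : R l[a] x :=
  hl.rel_of_mem_take_of_mem_drop
    (take_append_getElem ha ▸ mem_append_right _ (mem_singleton_self _)) hx

variable [LinearOrder α]

theorem Pairwise.filter_lt_getElem (hl : l.Pairwise (· > ·)) (ha : a < l.length) :
    l.filter (· < l[a]) = l.drop (a + 1) := by
  conv_lhs => enter [2]; rw [eq_take_append_getElem_cons_drop ha]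
  rw [filter_append, filter_cons_of_neg (by simp), filter_eq_nil_iff.2, filter_eq_self.2,
    nil_append]
  · exact fun x hx => by simpa using hl.rel_getElem_of_mem_drop ha hx
  · exact fun x hx => by simpa using (hl.rel_getElem_of_mem_take ha hx).le

theorem Pairwise.countP_le_eq_countP_drop (hl : l.Pairwise (· ≥ ·)) (ha : a < l.length) {j : α}
    (hj : j < l[a]) : l.countP (· ≤ j) = (l.drop (a + 1)).countP (· ≤ j) := by
  conv_lhs => enter [2]; rw [eq_take_append_getElem_cons_drop ha]
  rw [countP_append, countP_cons_of_neg (by simpa using hj), countP_eq_zero.2, zero_add]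
  exact fun x hx => by simpa using hj.trans_le (hl.rel_getElem_of_mem_take ha hx)

theorem Pairwise.length_sub_le_countP_le (hl : l.Pairwise (· ≥ ·)) (ha : a < l.length) {j : α}
    (hj : l[a] ≤ j) : l.length - a ≤ l.countP (· ≤ j) := by
  calc l.length - a = (l.drop a).countP (· ≤ j) := by
        rw [countP_eq_length.2, length_drop]
        rw [← getElem_cons_drop ha]
        rintro x (_ | ⟨_, hx⟩)
        · simpa using hj
        · simpa using (hl.rel_getElem_of_mem_drop ha hx).trans hj
    _ ≤ l.countP (· ≤ j) := (drop_sublist a l).countP_le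

end List

open Finset

/-- The beta-number of row `a`: the position of its north step on the profile of `l`, so that
`betaSet l` is the complement of `pathSet l`. -/
def betaNum (l : List ℕ) (a : ℕ) : ℕ := l.getD a 0 + (l.length - 1 - a)

def betaSet (l : List ℕ) : Finset ℕ := (range l.length).image (betaNum l)

/-- The position of the east step of the profile of `l` below column `j`. -/
def eastStep (l : List ℕ) (j : ℕ) : ℕ := j + l.countP (· ≤ j)

section Profile

variable {l : List ℕ} {i j : ℕ}

theorem mem_betaSet {b : ℕ} : b ∈ betaSet l ↔ ∃ a < l.length, betaNum l a = b := by
  simp [betaSet]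

theorem betaNum_strictAntiOn (hl : l.Pairwise (· ≥ ·)) :
    StrictAntiOn (betaNum l) (Set.Iio l.length) := by
  intro a ha b hb hab
  have := List.pairwise_iff_getElem.1 hl a b ha hb hab
  simp only [Set.mem_Iio] at ha hb
  simp only [betaNum, List.getD_eq_getElem _ _ ha, List.getD_eq_getElem _ _ hb]
  omega

theorem eastStep_strictMono : StrictMono (eastStep l) := by
  intro j j' h
  have : l.countP (· ≤ j) ≤ l.countP (· ≤ j') :=
    List.countP_mono_left fun x _ hx => by simp only [decide_eq_true_eq] at hx ⊢; omega
  simp only [eastStep]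
  omega

theorem eastStep_notMem_betaSet (hl : l.Pairwise (· ≥ ·)) (j : ℕ) :
    eastStep l j ∉ betaSet l := by
  rintro hmem
  obtain ⟨a, ha, hβ⟩ := mem_betaSet.1 hmem
  simp only [betaNum, eastStep, List.getD_eq_getElem _ _ ha] at hβ
  rcases le_or_gt l[a] j with h | h
  · have := hl.length_sub_le_countP_le ha h
    omega
  · have := hl.countP_le_eq_countP_drop ha h
    have := (l.drop (a + 1)).countP_le_length (p := (· ≤ j))
    simp only [List.length_drop] at this
    omega

theorem hookLen_pos (hj : j < l.getD i 0) : 0 < hookLen l i j := by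
  unfold hookLen
  omega

theorem hookLen_add_eastStep (hl : l.Pairwise (· ≥ ·)) (hi : i < l.length)
    (hj : j < l.getD i 0) : hookLen l i j + eastStep l j = betaNum l i := by
  rw [List.getD_eq_getElem _ _ hi] at hj
  have hsplit := (l.drop (i + 1)).length_eq_countP_add_countP (j < ·)
  have hbelow := hl.countP_le_eq_countP_drop hi hj
  simp only [decide_eq_true_eq, not_lt, List.length_drop] at hsplit
  simp only [hookLen, eastStep, betaNum, List.getD_eq_getElem _ _ hi]
  omega

theorem card_range_sdiff_betaSet_le (hl : l.Pairwise (· ≥ ·)) (hi : i < l.length) :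
    #(range (betaNum l i) \ betaSet l) ≤ l.getD i 0 := by
  have hanti := betaNum_strictAntiOn hl
  have hlower : (Ioo i l.length).image (betaNum l) ⊆ range (betaNum l i) := by
    simp only [image_subset_iff, mem_Ioo, mem_range]
    exact fun a ha => hanti hi ha.2 ha.1
  have hbeta : (Ioo i l.length).image (betaNum l) ⊆ betaSet l :=
    image_subset_image fun a ha => mem_range.2 (mem_Ioo.1 ha).2
  calc #(range (betaNum l i) \ betaSet l)
      ≤ #(range (betaNum l i) \ (Ioo i l.length).image (betaNum l)) :=
        card_le_card (sdiff_subset_sdiff subset_rfl hbeta)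
    _ = betaNum l i - (l.length - 1 - i) := by
        rw [card_sdiff_of_subset hlower, card_range, card_image_of_injOn, Nat.card_Ioo,
          Nat.sub_right_comm]
        exact hanti.injOn.mono fun a ha => (mem_Ioo.1 ha).2
    _ = l.getD i 0 := by simp only [betaNum]; omega

theorem image_eastStep (hl : l.Pairwise (· ≥ ·)) (hi : i < l.length) :
    (range (l.getD i 0)).image (eastStep l) = range (betaNum l i) \ betaSet l := by
  refine eq_of_subset_of_card_le ?_ ?_
  · simp only [image_subset_iff, mem_range, mem_sdiff]
    intro j hj
    have := hookLen_add_eastStep hl hi hj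
    have := hookLen_pos hj
    exact ⟨by omega, eastStep_notMem_betaSet hl j⟩
  · rw [card_image_of_injective _ eastStep_strictMono.injective, card_range]
    exact card_range_sdiff_betaSet_le hl hi

end Profile

/-- The hook lengths of the partition whose beta-set is `B`. -/
def hookSetOf (B : Set ℕ) : Set ℕ := {h | 0 < h ∧ ∃ s ∉ B, s + h ∈ B}

section HookSetOf

variable {B : Set ℕ}

theorem add_notMem_hookSetOf {a c : ℕ} (ha : a ∉ hookSetOf B) (hc : c ∉ hookSetOf B) :
    a + c ∉ hookSetOf B := by
  rcases Nat.eq_zero_or_pos a with rfl | ha0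
  · rwa [zero_add]
  rcases Nat.eq_zero_or_pos c with rfl | hc0
  · rwa [add_zero]
  rintro ⟨-, s, hs, hsac⟩
  by_cases hsc : s + c ∈ B
  · exact hc ⟨hc0, s, hs, hsc⟩
  · exact ha ⟨ha0, s + c, hsc, by rwa [add_assoc, add_comm c]⟩

theorem hookSetOf_finite (hB : B.Finite) : (hookSetOf B).Finite := by
  obtain ⟨M, hM⟩ := hB.bddAbove
  refine (Set.finite_Iic M).subset ?_
  rintro h ⟨-, s, -, hsh⟩
  have := hM hsh
  simp only [Set.mem_Iic]
  omega

theorem hookSetOf_eq_self (h0 : 0 ∉ B) (hadd : ∀ a ∉ B, ∀ c ∉ B, a + c ∉ B) :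
    hookSetOf B = B := by
  ext h
  refine ⟨fun ⟨_, s, hs, hsh⟩ => ?_, fun hh => ⟨?_, 0, h0, by rwa [zero_add]⟩⟩
  · by_contra hh
    exact hadd s hs h hh hsh
  · exact Nat.pos_of_ne_zero (ne_of_mem_of_not_mem hh h0)

end HookSetOf

theorem hookset_eq_hookSetOf {l : List ℕ} (hl : l.Pairwise (· ≥ ·)) :
    hookset l = hookSetOf (betaSet l) := by
  ext h
  constructor
  · rintro ⟨i, j, hi, hj, rfl⟩
    refine ⟨hookLen_pos hj, eastStep l j, eastStep_notMem_betaSet hl j, ?_⟩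
    rw [add_comm, hookLen_add_eastStep hl hi hj]
    exact mem_betaSet.2 ⟨i, hi, rfl⟩
  · rintro ⟨hpos, s, hs, hsh⟩
    obtain ⟨i, hi, hβ⟩ := mem_betaSet.1 hsh
    have hgap : s ∈ range (betaNum l i) \ betaSet l := mem_sdiff.2 ⟨mem_range.2 (by omega), hs⟩
    rw [← image_eastStep hl hi, mem_image] at hgap
    obtain ⟨j, hj, rfl⟩ := hgap
    have := hookLen_add_eastStep hl hi (mem_range.1 hj)
    exact ⟨i, j, hi, mem_range.1 hj, by omega⟩

/-- The partition with beta-set `B`: the part at a beta-number `b` counts the non-beta-numbers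
below `b`. -/
def ofBetaSet (B : Finset ℕ) : List ℕ :=
  (B.sort (· ≥ ·)).map fun b => #((range b).filter (· ∉ B))

section OfBetaSet

variable {B : Finset ℕ}

theorem isPartitionList_ofBetaSet (h0 : 0 ∉ B) : IsPartitionList (ofBetaSet B) := by
  refine ⟨(B.pairwise_sort _).map _ fun b b' hb =>
    card_le_card (filter_subset_filter _ (range_subset_range.2 hb)), ?_⟩
  simp only [ofBetaSet, List.mem_map, Finset.mem_sort]
  rintro _ ⟨b, hb, rfl⟩
  have hb0 : 0 < b := Nat.pos_of_ne_zero (ne_of_mem_of_not_mem hb h0)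
  exact card_pos.2 ⟨0, mem_filter.2 ⟨mem_range.2 hb0, h0⟩⟩

theorem betaNum_ofBetaSet {a : ℕ} (ha : a < (B.sort (· ≥ ·)).length) :
    betaNum (ofBetaSet B) a = (B.sort (· ≥ ·))[a] := by
  have hbelow : #((range (B.sort (· ≥ ·))[a]).filter (· ∈ B)) =
      (B.sort (· ≥ ·)).length - 1 - a := by
    have : (range (B.sort (· ≥ ·))[a]).filter (· ∈ B) =
        ((B.sort (· ≥ ·)).filter (· < (B.sort (· ≥ ·))[a])).toFinset := by
      ext s
      simp [and_comm]
    rw [this, List.toFinset_card_of_nodup ((B.sort_nodup _).filter _),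
      B.sortedGT_sort.pairwise.filter_lt_getElem ha, List.length_drop, Nat.sub_sub,
      Nat.add_comm]
  have hsplit := (range (B.sort (· ≥ ·))[a]).card_filter_add_card_filter_not (· ∉ B)
  simp only [not_not, card_range] at hsplit
  rw [betaNum, ofBetaSet, List.getD_eq_getElem _ _ (by rwa [List.length_map]), List.getElem_map]
  simp only [List.length_map]
  omega

theorem betaSet_ofBetaSet : betaSet (ofBetaSet B) = B := by
  ext b
  rw [mem_betaSet, ofBetaSet, List.length_map]
  constructor
  · rintro ⟨a, ha, rfl⟩
    rw [← ofBetaSet, betaNum_ofBetaSet ha]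
    exact (mem_sort (· ≥ ·)).1 (List.getElem_mem ha)
  · intro hb
    obtain ⟨a, ha, rfl⟩ := List.mem_iff_getElem.1 ((mem_sort (· ≥ ·)).2 hb)
    exact ⟨a, ha, betaNum_ofBetaSet ha⟩

end OfBetaSet

theorem numericalMonoid_compl_union_zero_iff {H : Set ℕ} (h0 : 0 ∉ H) :
    NumericalMonoid (Hᶜ ∪ {0}) ↔ (∀ a ∉ H, ∀ c ∉ H, a + c ∉ H) ∧ H.Finite := by
  rw [Set.union_eq_left.2 (Set.singleton_subset_iff.2 h0), NumericalMonoid, compl_compl]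
  exact and_iff_right h0

theorem exists_hookset_eq_iff {H : Set ℕ} (h0 : 0 ∉ H) :
    (∃ l : List ℕ, IsPartitionList l ∧ hookset l = H) ↔ NumericalMonoid (Hᶜ ∪ {0}) := by
  rw [numericalMonoid_compl_union_zero_iff h0]
  constructor
  · rintro ⟨l, ⟨hl, -⟩, rfl⟩
    rw [hookset_eq_hookSetOf hl]
    exact ⟨fun a ha c hc => add_notMem_hookSetOf ha hc,
      hookSetOf_finite (betaSet l).finite_toSet⟩
  · rintro ⟨hadd, hfin⟩
    have hl := isPartitionList_ofBetaSet (B := hfin.toFinset) (by simpa using h0)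
    refine ⟨_, hl, ?_⟩
    rw [hookset_eq_hookSetOf hl.1, betaSet_ofBetaSet, hfin.coe_toFinset,
      hookSetOf_eq_self h0 hadd]

theorem stmt6 :
    (∀ H : Set ℕ, (∀ h ∈ H, 0 < h) →
      ((∃ l : List ℕ, IsPartitionList l ∧ hookset l = H) ↔
        NumericalMonoid (Hᶜ ∪ {0}))) ∧
    (∀ g : ℕ, ∀ H : Set ℕ, (∀ h ∈ H, 0 < h) →
      (((∃ l : List ℕ, IsPartitionList l ∧ hookset l = H) ∧ H.ncard = g) ↔
        (NumericalMonoid (Hᶜ ∪ {0}) ∧ ((Hᶜ ∪ {0})ᶜ).ncard = g))) := by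
  have h0 : ∀ H : Set ℕ, (∀ h ∈ H, 0 < h) → 0 ∉ H := fun H hH h => (hH 0 h).false
  refine ⟨fun H hH => exists_hookset_eq_iff (h0 H hH), fun g H hH => ?_⟩
  have hcompl : (Hᶜ ∪ {0})ᶜ = H := by
    rw [Set.union_eq_left.2 (Set.singleton_subset_iff.2 (h0 H hH)), compl_compl]
  rw [hcompl]
  exact and_congr_left' (exists_hookset_eq_iff (h0 H hH))
end

section
/- The partition λ_k = (2k-1, 2k-3, ..., 3, 1) (odd parts descending) is a 3-core whose hookset is exactly the set of all positive integers not divisible by 3 and at most 3k - 2; it partitions k². -/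
/-- The partition `(2k-1, 2k-3, ..., 3, 1)`. -/
def oddStair (k : ℕ) : List ℕ := (List.range k).reverse.map (fun a => 2 * a + 1)

/-!
Counting from the bottom, row `r` of `oddStair k` has length `2r + 1`, and exactly `r - m` of the
rows below it reach past column `2m` or `2m + 1`. The cell in column `2m` therefore has hook
`(2r + 1 - 2m) + (r - m) = 3(r - m) + 1`, the cell in column `2m + 1` (for `m < r`) has hook
`3(r - m) - 1`, and as `m ≤ r < k` vary these run through all `h ≤ 3k - 2` prime to `3`.
-/

lemma oddStair_succ (k : ℕ) : oddStair (k + 1) = (2 * k + 1) :: oddStair k := by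
  simp [oddStair, List.range_succ]

@[simp] lemma oddStair_length (k : ℕ) : (oddStair k).length = k := by
  simp [oddStair]

lemma oddStair_getD {i k : ℕ} (h : i < k) : (oddStair k).getD i 0 = 2 * (k - 1 - i) + 1 := by
  induction k generalizing i with
  | zero => omega
  | succ k ih =>
    rw [oddStair_succ]
    cases i with
    | zero => simp
    | succ i =>
      rw [List.getD_cons_succ, ih (by omega)]
      omega

lemma oddStair_drop (i k : ℕ) : (oddStair k).drop i = oddStair (k - i) := by
  induction k generalizing i with
  | zero => simp [oddStair]
  | succ k ih =>
    cases i with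
    | zero => simp
    | succ i => simpa [oddStair_succ] using ih i

lemma countP_lt_oddStair (j n : ℕ) :
    (oddStair n).countP (fun a => decide (j < a)) = n - (j + 1) / 2 := by
  induction n with
  | zero => simp [oddStair]
  | succ n ih =>
    rw [oddStair_succ, List.countP_cons, ih]
    by_cases h : j < 2 * n + 1 <;> simp [h] <;> omega

lemma isPartitionList_oddStair (k : ℕ) : IsPartitionList (oddStair k) := by
  refine ⟨?_, fun p hp => ?_⟩
  · simpa [oddStair, List.pairwise_map, List.pairwise_reverse] using
      (List.pairwise_lt_range (n := k)).imp fun h => by omega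
  · obtain ⟨a, -, rfl⟩ := List.mem_map.mp hp
    omega

lemma sum_oddStair (k : ℕ) : (oddStair k).sum = k ^ 2 := by
  induction k with
  | zero => simp [oddStair]
  | succ k ih => rw [oddStair_succ, List.sum_cons, ih]; ring

lemma mem_hookset_oddStair {k h : ℕ} :
    h ∈ hookset (oddStair k) ↔
      ∃ r j, r < k ∧ j ≤ 2 * r ∧ h = (2 * r + 1 - j) + (r - (j + 1) / 2) := by
  constructor
  · rintro ⟨i, j, hi, hj, rfl⟩
    rw [oddStair_length] at hi
    rw [oddStair_getD hi] at hj
    refine ⟨k - 1 - i, j, by omega, by omega, ?_⟩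
    rw [hookLen, oddStair_getD hi, oddStair_drop, countP_lt_oddStair]
    omega
  · rintro ⟨r, j, hr, hj, rfl⟩
    have hi : k - 1 - r < k := by omega
    refine ⟨k - 1 - r, j, by simpa using hi, by rw [oddStair_getD hi]; omega, ?_⟩
    rw [hookLen, oddStair_getD hi, oddStair_drop, countP_lt_oddStair]
    omega

lemma hookset_oddStair (k : ℕ) :
    hookset (oddStair k) = {h | 0 < h ∧ ¬ 3 ∣ h ∧ h ≤ 3 * k - 2} := by
  ext h
  rw [mem_hookset_oddStair, Set.mem_ofPred_eq]
  constructor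
  · rintro ⟨r, j, hr, hj, rfl⟩
    omega
  · rintro ⟨hpos, hndvd, hle⟩
    rcases (by omega : h % 3 = 1 ∨ h % 3 = 2) with hmod | hmod
    · exact ⟨h / 3, 0, by omega, by omega, by omega⟩
    · exact ⟨h / 3 + 1, 1, by omega, by omega, by omega⟩

lemma isCore_oddStair (k : ℕ) : IsCore (oddStair k) 3 := by
  rw [IsCore, hookset_oddStair]
  exact fun h hh => hh.2.1

theorem stmt15 (k : ℕ) :
    IsPartitionList (oddStair k) ∧ IsCore (oddStair k) 3 ∧
    hookset (oddStair k) = {h | 0 < h ∧ ¬ 3 ∣ h ∧ h ≤ 3 * k - 2} ∧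
    (oddStair k).sum = k ^ 2 :=
  ⟨isPartitionList_oddStair k, isCore_oddStair k, hookset_oddStair k, sum_oddStair k⟩
end

section
/- Let λ be a self-conjugate-shaped partition with largest part equal to the number of parts k, such that the i-th smallest part is strictly greater than i for all 1 ≤ i < k (a strict Dyck path partition). Then the hookset of λ is exactly {1, 2, ..., 2k-1}, an initial segment of the positive integers. -/
/-!
Read the profile of `λ` as a lattice path of `2k` unit steps. The hook length of a cell is the
distance from the east step of its column to the north step of its row, so the hookset is the set
of positive differences (north position) − (east position). For a strict Dyck path the `j`-th east
step lies at position at most `2j` and the north step of row `i ≥ 1` at position at least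
`2(k - i)`; for each `1 ≤ d ≤ 2k - 1` this gives more than `2k - d` candidates in `[d, 2k - 1]`
among the east positions shifted by `d` and the north positions, so by pigeonhole some north step
lies exactly `d` after some east step.
-/

open Finset

/-- Position of the north step of row `i` on the profile of `l`, numbered from `0` as in
`pathSet`. -/
def northPos (l : List ℕ) (i : ℕ) : ℕ := l.getD i 0 + (l.length - 1 - i)

/-- Position of the east step of column `j` on the profile of `l`. -/
def eastPos (l : List ℕ) (j : ℕ) : ℕ := j + l.countP (· ≤ j)

theorem exists_add_eq_of_le_two_mul {k d : ℕ} {e b : ℕ → ℕ} (he : StrictMono e)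
    (he_le : ∀ j < k, e j ≤ 2 * j) (hb : Set.InjOn b (Set.Iio k))
    (hb_le : ∀ i < k, b i ≤ 2 * k - 1) (hb_zero : b 0 = 2 * k - 1)
    (hb_ge : ∀ i, 1 ≤ i → i < k → 2 * (k - i) ≤ b i) (hd : 0 < d) (hdk : d ≤ 2 * k - 1) :
    ∃ i < k, ∃ j, e j + d = b i := by
  set m := (2 * k + 1 - d) / 2
  set n := min k ((2 * k - d) / 2 + 1)
  have hS : (range m).image (e · + d) ⊆ Icc d (2 * k - 1) := by
    intro x hx
    obtain ⟨j, hj, rfl⟩ := mem_image.1 hx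
    have := he_le j (by simp only [mem_range] at hj; omega)
    simp only [mem_range, mem_Icc] at hj ⊢
    omega
  have hT : (range n).image b ⊆ Icc d (2 * k - 1) := by
    intro x hx
    obtain ⟨i, hi, rfl⟩ := mem_image.1 hx
    simp only [mem_range, mem_Icc] at hi ⊢
    refine ⟨?_, hb_le i (by omega)⟩
    rcases Nat.eq_zero_or_pos i with rfl | hi0
    · omega
    · have := hb_ge i hi0 (by omega); omega
  have hcard : #(Icc d (2 * k - 1)) < #((range m).image (e · + d)) + #((range n).image b) := by
    rw [card_image_of_injective _ (f := fun j => e j + d) ((add_left_injective d).comp he.injective),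
      card_image_of_injOn (hb.mono fun i hi => by simp only [coe_range, Set.mem_Iio] at hi ⊢; omega),
      Nat.card_Icc, card_range, card_range]
    omega
  obtain ⟨x, hx⟩ := inter_nonempty_of_card_lt_card_add_card hS hT hcard
  simp only [mem_inter, mem_image, mem_range] at hx
  obtain ⟨⟨j, -, rfl⟩, i, hi, hbi⟩ := hx
  exact ⟨i, by omega, j, hbi.symm⟩

section Profile

variable {l : List ℕ} {i j : ℕ}

theorem getD_le_getD_of_le (hl : l.SortedGE) (hij : i ≤ j) (hj : j < l.length) :
    l.getD j 0 ≤ l.getD i 0 := by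
  rw [List.getD_eq_getElem _ _ hj, List.getD_eq_getElem _ _ (hij.trans_lt hj)]
  exact hl.getElem_ge_getElem_of_le hij

theorem countP_eq_countP_drop {p : ℕ → Bool} {n : ℕ} (h : ∀ a < n, p (l.getD a 0) = false) :
    l.countP p = (l.drop n).countP p := by
  conv_lhs => rw [← List.take_append_drop n l]
  rw [List.countP_append, List.countP_eq_zero.2, zero_add]
  intro x hx
  obtain ⟨a, ha, rfl⟩ := List.mem_iff_getElem.1 hx
  simp only [List.length_take, lt_min_iff] at ha
  have := h a ha.1
  rw [List.getD_eq_getElem _ _ ha.2] at this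
  simpa [List.getElem_take] using this

theorem hookLen_add_eastPos (hl : l.SortedGE) (hi : i < l.length) (hj : j < l.getD i 0) :
    hookLen l i j + eastPos l j = northPos l i := by
  have hcount : l.countP (· ≤ j) = (l.drop (i + 1)).countP (· ≤ j) :=
    countP_eq_countP_drop fun a ha => by
      have := getD_le_getD_of_le hl (Nat.lt_succ_iff.1 ha) hi
      simp only [decide_eq_false_iff_not, not_le]
      omega
  have hsplit := (l.drop (i + 1)).length_eq_countP_add_countP (fun a => decide (j < a))
  simp only [decide_eq_true_eq, not_lt, List.length_drop] at hsplit
  unfold hookLen eastPos northPos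
  omega

theorem lt_getD_of_eastPos_lt_northPos (hl : l.SortedGE) (hi : i < l.length)
    (h : eastPos l j < northPos l i) : j < l.getD i 0 := by
  by_contra! hle
  have hcount : l.length - i ≤ l.countP (· ≤ j) :=
    calc l.length - i = (l.drop i).countP (· ≤ j) := by
          rw [List.countP_eq_length.2, List.length_drop]
          intro x hx
          obtain ⟨a, ha, rfl⟩ := List.mem_iff_getElem.1 hx
          simp only [List.length_drop] at ha
          have := getD_le_getD_of_le hl (Nat.le_add_right i a) (by omega)
          rw [List.getD_eq_getElem _ _ (by omega)] at this
          simp only [List.getElem_drop, decide_eq_true_eq]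
          omega
      _ ≤ l.countP (· ≤ j) := (List.drop_sublist i l).countP_le
  unfold eastPos northPos at h
  omega

theorem mem_hookset_iff_s17 (hl : l.SortedGE) {h : ℕ} :
    h ∈ hookset l ↔ 0 < h ∧ ∃ i < l.length, ∃ j, eastPos l j + h = northPos l i := by
  constructor
  · rintro ⟨i, j, hi, hj, rfl⟩
    exact ⟨by unfold hookLen; omega, i, hi, j, by rw [add_comm, hookLen_add_eastPos hl hi hj]⟩
  · rintro ⟨hpos, i, hi, j, hij⟩
    have hj := lt_getD_of_eastPos_lt_northPos (j := j) hl hi (by omega)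
    exact ⟨i, j, hi, hj, by have := hookLen_add_eastPos hl hi hj; omega⟩

theorem eastPos_strictMono (l : List ℕ) : StrictMono (eastPos l) := fun j j' hjj' => by
  have : l.countP (· ≤ j) ≤ l.countP (· ≤ j') :=
    List.countP_mono_left fun x _ hx => by simp only [decide_eq_true_eq] at hx ⊢; omega
  unfold eastPos
  omega

theorem northPos_strictAntiOn (hl : l.SortedGE) :
    StrictAntiOn (northPos l) (Set.Iio l.length) := fun i _ j hj hij => by
  have := getD_le_getD_of_le hl hij.le hj
  simp only [Set.mem_Iio] at hj
  unfold northPos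
  omega

end Profile

section StrictDyck

variable {l : List ℕ} {k i j : ℕ}

theorem northPos_zero (hlen : l.length = k) (htop : l.getD 0 0 = k) :
    northPos l 0 = 2 * k - 1 := by
  unfold northPos
  omega

theorem northPos_le (hl : l.SortedGE) (hlen : l.length = k) (htop : l.getD 0 0 = k)
    (hi : i < k) : northPos l i ≤ 2 * k - 1 := by
  have := getD_le_getD_of_le hl (Nat.zero_le i) (hlen ▸ hi)
  unfold northPos
  omega

theorem two_mul_sub_le_northPos (hlen : l.length = k)
    (hstrict : ∀ i : ℕ, 1 ≤ i → i < k → i < l.getD (k - i) 0) (hi₁ : 1 ≤ i) (hi : i < k) :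
    2 * (k - i) ≤ northPos l i := by
  have := hstrict (k - i) (by omega) (by omega)
  rw [Nat.sub_sub_self hi.le] at this
  unfold northPos
  omega

theorem eastPos_le_two_mul (hlen : l.length = k) (htop : l.getD 0 0 = k)
    (hstrict : ∀ i : ℕ, 1 ≤ i → i < k → i < l.getD (k - i) 0) (hj : j < k) :
    eastPos l j ≤ 2 * j := by
  have hcount : l.countP (· ≤ j) = (l.drop (k - j)).countP (· ≤ j) :=
    countP_eq_countP_drop fun a ha => by
      simp only [decide_eq_false_iff_not, not_le]
      rcases Nat.eq_zero_or_pos a with rfl | ha₀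
      · omega
      · have := hstrict (k - a) (by omega) (by omega)
        rw [Nat.sub_sub_self (by omega)] at this
        omega
  have := (l.drop (k - j)).countP_le_length (p := (· ≤ j))
  rw [List.length_drop] at this
  unfold eastPos
  omega

end StrictDyck

theorem stmt17_general (l : List ℕ) (hl : IsPartitionList l) (k : ℕ)
    (hlen : l.length = k) (htop : l.getD 0 0 = k)
    (hstrict : ∀ i : ℕ, 1 ≤ i → i < k → i < l.getD (k - i) 0) :
    hookset l = {h | 0 < h ∧ h ≤ 2 * k - 1} := by
  have hsorted : l.SortedGE := hl.1.sortedGE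
  ext h
  rw [mem_hookset_iff_s17 hsorted, Set.mem_ofPred_eq]
  constructor
  · rintro ⟨hpos, i, hi, j, hij⟩
    have := northPos_le hsorted hlen htop (hlen ▸ hi)
    omega
  · rintro ⟨hpos, hle⟩
    have hinj : Set.InjOn (northPos l) (Set.Iio k) := hlen ▸ (northPos_strictAntiOn hsorted).injOn
    obtain ⟨i, hi, j, hij⟩ := exists_add_eq_of_le_two_mul (eastPos_strictMono l)
      (fun _ => eastPos_le_two_mul hlen htop hstrict) hinj (fun _ => northPos_le hsorted hlen htop)
      (northPos_zero hlen htop) (fun _ => two_mul_sub_le_northPos hlen hstrict) hpos hle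
    exact ⟨hpos, i, hlen ▸ hi, j, hij⟩

theorem stmt17 (l : List ℕ) (hl : IsPartitionList l) (k : ℕ) (hk : 0 < k)
    (hlen : l.length = k) (htop : l.getD 0 0 = k)
    (hstrict : ∀ i : ℕ, 1 ≤ i → i < k → i < l.getD (k - i) 0) :
    hookset l = {h | 0 < h ∧ h ≤ 2 * k - 1} :=
  stmt17_general l hl k hlen htop hstrict
end
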